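/- arXiv:2408.10048 — 3 statements merged into one kernel-verified Lean document; each statement's English description precedes it below -/
import Mathlib

section
/- Consider the semiflow Φ_t(u,y) = (θ_t u, φ(t,u,y)) on U × Y where φ(t,u,·) is linear and satisfies the expansion estimate ‖φ(t,u,y)‖ ≥ K e^{α t}‖y‖ for all t ≥ 0, u ∈ U, y ∈ Y with constants K, α > 0. Then no point (u,y) with y ≠ 0 is chain recurrent: for ε > 0 small enough and τ > 0 large enough there is no (ε,τ)-chain from (u,y) to itself. -/
/-- An `(ε,τ)`-chain from `a` to `b` for a semiflow `ψ` on a metric space. -/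
def SemiflowChain {X : Type*} [PseudoMetricSpace X] (ψ : ℝ → X → X)
    (ε τ : ℝ) (a b : X) : Prop :=
  ∃ (q : ℕ) (x : ℕ → X) (ts : ℕ → ℝ), 1 ≤ q ∧ x 0 = a ∧ x q = b ∧
    ∀ j < q, τ ≤ ts j ∧ dist (ψ (ts j) (x j)) (x (j + 1)) < ε

/-- For a skew-product semiflow with linear, uniformly exponentially
expanding fiber maps, no point `(u,y)` with `y ≠ 0` is chain recurrent:
for `ε > 0` small enough and `τ` large enough there is no `(ε,τ)`-chain
from `(u,y)` to itself. -/
theorem stmt5 {U Y : Type*} [MetricSpace U]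
    [NormedAddCommGroup Y] [NormedSpace ℝ Y]
    (θ : ℝ → U → U) (φ : ℝ → U → Y →L[ℝ] Y)
    (K α : ℝ) (hK : 0 < K) (hα : 0 < α)
    (hexp : ∀ t : ℝ, 0 ≤ t → ∀ (u : U) (y : Y),
      K * Real.exp (α * t) * ‖y‖ ≤ ‖φ t u y‖)
    (u : U) (y : Y) (hy : y ≠ 0) :
    ∃ ε₀ > 0, ∃ τ₀ : ℝ, ∀ ε : ℝ, 0 < ε → ε ≤ ε₀ → ∀ τ : ℝ, τ₀ ≤ τ →
      ¬ SemiflowChain (fun (t : ℝ) (p : U × Y) => (θ t p.1, φ t p.1 p.2)) ε τ (u, y) (u, y) := by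
  have hy0 : 0 < ‖y‖ := norm_pos_iff.mpr hy
  refine ⟨‖y‖ / 2, by positivity, max 1 (Real.log (2 / K) / α), ?_⟩
  intro ε hε hε' τ hτ hchain
  obtain ⟨q, x, ts, hq, hx0, hxq, hstep⟩ := hchain
  have hτ1 : (1 : ℝ) ≤ τ := le_trans (le_max_left _ _) hτ
  have hβ : 2 ≤ K * Real.exp (α * τ) := by
    have h : Real.log (2 / K) / α ≤ τ := le_trans (le_max_right _ _) hτ
    have hlog : Real.log (2 / K) ≤ α * τ := by
      rw [div_le_iff₀ hα] at h; linarith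
    calc (2 : ℝ) = K * (2 / K) := by field_simp
      _ ≤ K * Real.exp (α * τ) := by
          refine mul_le_mul_of_nonneg_left ?_ hK.le
          rw [← Real.exp_log (show (0:ℝ) < 2 / K by positivity)]
          exact Real.exp_le_exp.mpr hlog
  have key : ∀ j ≤ q, ‖y‖ + j * (‖y‖ / 2) ≤ ‖(x j).2‖ := by
    intro j hj
    induction j with
    | zero => simp [hx0]
    | succ n ih =>
      have hn : n < q := Nat.lt_of_succ_le hj
      have ihn := ih hn.le
      obtain ⟨hts, hd⟩ := hstep n hn
      have hts0 : (0 : ℝ) ≤ ts n := le_trans (by linarith) hts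
      have hexp' := hexp (ts n) hts0 (x n).1 (x n).2
      have hβn : 2 ≤ K * Real.exp (α * ts n) := by
        refine le_trans hβ (mul_le_mul_of_nonneg_left ?_ hK.le)
        exact Real.exp_le_exp.mpr (by nlinarith)
      have hnorm : 2 * ‖(x n).2‖ ≤ ‖φ (ts n) (x n).1 (x n).2‖ :=
        le_trans (mul_le_mul_of_nonneg_right hβn (norm_nonneg _)) hexp'
      have hdist : ‖φ (ts n) (x n).1 (x n).2 - (x (n + 1)).2‖ < ε := by
        have h2 : dist (φ (ts n) (x n).1 (x n).2) (x (n + 1)).2 ≤ dist ((θ (ts n) (x n).1, φ (ts n) (x n).1 (x n).2) : U × Y) (x (n + 1)) := by rw [Prod.dist_eq]; exact le_max_right _ _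
        calc ‖φ (ts n) (x n).1 (x n).2 - (x (n + 1)).2‖
            = dist (φ (ts n) (x n).1 (x n).2) (x (n + 1)).2 := (dist_eq_norm _ _).symm
          _ ≤ _ := h2
          _ < ε := hd
      have hsub := norm_sub_norm_le (φ (ts n) (x n).1 (x n).2) ((x (n + 1)).2)
      push_cast
      nlinarith [norm_nonneg (x n).2, Nat.cast_nonneg (α := ℝ) n]
  have hfin := key q le_rfl
  rw [hxq] at hfin
  have hq1 : (1 : ℝ) ≤ (q : ℝ) := by exact_mod_cast hq
  nlinarith
end

section
/- Consider the affine control system on a normed space with solutions φ(t, y, u) satisfying α φ(t,y,u) = φ(t, αy, αu) for α ∈ (0,1) and φ(t,0,0) = 0. Suppose E' is a set that is chain controllable (for all y,z ∈ E' and ε,τ > 0 there is a controlled (ε,τ)-chain from y to z). Then for every y ∈ E' and all ε, τ > 0 there exists a controlled (ε,τ)-chain from y to 0. -/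
/-- A controlled `(ε,τ)`-chain from `a` to `b` for an affine control system with
solution map `φ` and admissible control set `𝒰`. -/
def ControlledChain {Y C : Type*} [NormedAddCommGroup Y]
    (φ : ℝ → Y → C → Y) (𝒰 : Set C) (ε τ : ℝ) (a b : Y) : Prop :=
  ∃ (q : ℕ) (ys : ℕ → Y) (us : ℕ → C) (ts : ℕ → ℝ), 1 ≤ q ∧ ys 0 = a ∧ ys q = b ∧
    ∀ j < q, us j ∈ 𝒰 ∧ τ ≤ ts j ∧ ‖φ (ts j) (ys j) (us j) - ys (j + 1)‖ < ε

/-- For an affine control system satisfying the scaling identity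
`α φ(t,y,u) = φ(t, αy, αu)` for `α ∈ (0,1)` and `φ(t,0,0) = 0`, every point of a
chain controllable set admits controlled `(ε,τ)`-chains to `0` for all `ε, τ > 0`. -/
theorem stmt13 {Y C : Type*} [NormedAddCommGroup Y] [NormedSpace ℝ Y]
    [SMul ℝ C] [Zero C]
    (φ : ℝ → Y → C → Y) (𝒰 : Set C)
    (h0U : (0 : C) ∈ 𝒰)
    (hUscale : ∀ α : ℝ, 0 < α → α < 1 → ∀ u ∈ 𝒰, α • u ∈ 𝒰)
    (hscale : ∀ α : ℝ, 0 < α → α < 1 → ∀ (t : ℝ) (y : Y) (u : C),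
      α • φ t y u = φ t (α • y) (α • u))
    (hzero : ∀ t : ℝ, φ t 0 (0 : C) = 0)
    (E' : Set Y)
    (hcc : ∀ y ∈ E', ∀ z ∈ E', ∀ ε > 0, ∀ τ > 0, ControlledChain φ 𝒰 ε τ y z) :
    ∀ y ∈ E', ∀ ε > 0, ∀ τ > 0, ControlledChain φ 𝒰 ε τ y 0 := by
  intro y hy ε hε τ hτ
  obtain ⟨q, ys, us, ts, hq, hys0, hysq, hstep⟩ :=
    hcc y hy y hy (ε / 2) (by linarith) τ hτ
  have hq0 : 0 < q := hq
  -- choose α close to 1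
  set δ : ℝ := min (1 / 2) (ε / (2 * (‖y‖ + 1))) with hδdef
  have hδpos : 0 < δ := lt_min (by norm_num) (by positivity)
  have hδhalf : δ ≤ 1 / 2 := min_le_left _ _
  set α : ℝ := 1 - δ with hαdef
  have hα0 : 0 < α := by simp only [hαdef]; linarith
  have hα1 : α < 1 := by simp only [hαdef]; linarith
  have hδy : δ * ‖y‖ ≤ ε / 2 := by
    have h1 : δ ≤ ε / (2 * (‖y‖ + 1)) := min_le_right _ _
    have h2 : δ * ‖y‖ ≤ (ε / (2 * (‖y‖ + 1))) * ‖y‖ :=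
      mul_le_mul_of_nonneg_right h1 (norm_nonneg y)
    have h3 : (ε / (2 * (‖y‖ + 1))) * ‖y‖ ≤ (ε / (2 * (‖y‖ + 1))) * (‖y‖ + 1) := by
      have : (0:ℝ) < ε / (2 * (‖y‖ + 1)) := by positivity
      nlinarith
    have hne : (‖y‖ + 1) ≠ 0 := by positivity
    have h4 : (ε / (2 * (‖y‖ + 1))) * (‖y‖ + 1) = ε / 2 := by
      field_simp
    linarith
  -- choose K
  set M : ℝ := ‖φ (ts 0) (ys 0) (us 0)‖ with hMdef
  have hM0 : 0 ≤ M := norm_nonneg _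
  obtain ⟨n, hn⟩ := exists_pow_lt_of_lt_one (show (0:ℝ) < ε / (M + 1) by positivity) hα1
  set K : ℕ := max n 1 with hKdef
  have hK1 : 1 ≤ K := le_max_right _ _
  have hαKM : α ^ K * M < ε := by
    have h1 : α ^ K ≤ α ^ n := pow_le_pow_of_le_one hα0.le hα1.le (le_max_left _ _)
    have h2 : α ^ K * M ≤ α ^ n * (M + 1) := by
      have := pow_nonneg hα0.le K
      have := pow_nonneg hα0.le n
      nlinarith
    have h3 : α ^ n * (M + 1) < ε := by
      have : (0:ℝ) < M + 1 := by linarith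
      calc α ^ n * (M + 1) < (ε / (M + 1)) * (M + 1) :=
            mul_lt_mul_of_pos_right hn this
        _ = ε := by field_simp
    linarith
  have hαK1 : α ^ K < 1 := pow_lt_one₀ hα0.le hα1 (by omega)
  -- build the big chain
  refine ⟨K * q + 1,
    (fun j => if j ≤ K * q then α ^ (j / q) • ys (j % q) else 0),
    (fun j => if j < q then us j else α ^ (j / q) • us (j % q)),
    (fun j => ts (j % q)), by omega, ?_, ?_, ?_⟩
  · simp [Nat.zero_mod, Nat.zero_div, hys0]
  · have hKq : K * q + 1 > K * q := Nat.lt_succ_self _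
    dsimp only
    rw [if_neg (by omega)]
  · intro j hj
    dsimp only
    by_cases hjK : j = K * q
    · -- final step to 0
      subst hjK
      have hdiv : K * q / q = K := by
        rw [Nat.mul_div_assoc K (dvd_refl q), Nat.div_self hq0, Nat.mul_one]
      have hmod : K * q % q = 0 := Nat.mul_mod_left K q
      have hjq : ¬ K * q < q := by
        have : 1 * q ≤ K * q := Nat.mul_le_mul_right q hK1
        omega
      obtain ⟨hu0, ht0, -⟩ := hstep 0 hq0
      refine ⟨?_, ?_, ?_⟩
      · rw [if_neg hjq, hdiv, hmod]
        exact hUscale _ (pow_pos hα0 K) hαK1 _ hu0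
      · rw [hmod]; exact ht0
      · rw [if_neg hjq, if_pos (le_refl _), if_neg (by omega), hdiv, hmod]
        rw [← hscale _ (pow_pos hα0 K) hαK1, sub_zero, norm_smul]
        rw [Real.norm_eq_abs, abs_of_pos (pow_pos hα0 K)]
        exact hαKM
    · -- intermediate step
      have hjlt : j < K * q := by omega
      have hjle : j ≤ K * q := le_of_lt hjlt
      have hj1le : j + 1 ≤ K * q := hjlt
      set k : ℕ := j / q with hkdef
      set r : ℕ := j % q with hrdef
      have hrq : r < q := Nat.mod_lt _ hq0
      have hjqr : q * k + r = j := Nat.div_add_mod j q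
      obtain ⟨hur, htr, hnr⟩ := hstep r hrq
      have hαk0 : 0 < α ^ k := pow_pos hα0 k
      have hαk1 : α ^ k ≤ 1 := pow_le_one₀ hα0.le hα1.le
      -- value of φ at this step
      have hφval : φ (ts r) ((fun j => if j ≤ K * q then α ^ (j / q) • ys (j % q) else 0) j)
          ((fun j => if j < q then us j else α ^ (j / q) • us (j % q)) j)
          = α ^ k • φ (ts r) (ys r) (us r) := by
        by_cases hjq : j < q
        · have hk0 : k = 0 := Nat.div_eq_of_lt hjq
          have hrj : r = j := Nat.mod_eq_of_lt hjq
          simp only [if_pos hjle, if_pos hjq, hk0, pow_zero, one_smul, ← hkdef, ← hrdef, hrj]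
        · have hk1 : k ≠ 0 := by
            intro h
            rw [h, Nat.mul_zero, Nat.zero_add] at hjqr
            exact hjq (hjqr ▸ hrq)
          have hαklt : α ^ k < 1 := pow_lt_one₀ hα0.le hα1 hk1
          simp only [if_pos hjle, if_neg hjq, ← hkdef, ← hrdef]
          exact (hscale _ hαk0 hαklt _ _ _).symm
      -- membership
      refine ⟨?_, htr, ?_⟩
      · by_cases hjq : j < q
        · rw [if_pos hjq]; exact (hstep j hjq).1
        · have hk1 : k ≠ 0 := by
            intro h
            rw [h, Nat.mul_zero, Nat.zero_add] at hjqr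
            exact hjq (hjqr ▸ hrq)
          rw [if_neg hjq]
          exact hUscale _ hαk0 (pow_lt_one₀ hα0.le hα1 hk1) _ hur
      · -- norm estimate
        have htarget : ∃ w : Y,
            (if j + 1 ≤ K * q then α ^ ((j+1) / q) • ys ((j+1) % q) else 0) = α ^ k • w
            ∧ ‖ys (r + 1) - w‖ ≤ δ * ‖y‖ := by
          by_cases hr1 : r + 1 < q
          · refine ⟨ys (r + 1), ?_, by simp [norm_nonneg, mul_nonneg hδpos.le (norm_nonneg y)]⟩
            have hj1 : j + 1 = r + 1 + q * k := by omega
            have hd : (j + 1) / q = k := by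
              rw [hj1, Nat.add_mul_div_left _ _ hq0, Nat.div_eq_of_lt hr1, Nat.zero_add]
            have hm : (j + 1) % q = r + 1 := by
              rw [hj1, Nat.add_mul_mod_self_left, Nat.mod_eq_of_lt hr1]
            rw [if_pos hj1le, hd, hm]
          · have hr1' : r + 1 = q := by omega
            refine ⟨α • y, ?_, ?_⟩
            · have hj1 : j + 1 = q * (k + 1) := by
                rw [Nat.mul_add, Nat.mul_one]; omega
              have hd : (j + 1) / q = k + 1 := by
                rw [hj1, Nat.mul_div_cancel_left _ hq0]
              have hm : (j + 1) % q = 0 := by rw [hj1]; exact Nat.mul_mod_right q (k + 1)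
              rw [if_pos hj1le, hd, hm, hys0, pow_succ, mul_smul]
            · rw [hr1', hysq]
              have : y - α • y = δ • y := by
                rw [hαdef, sub_smul, one_smul]
                exact sub_sub_cancel y (δ • y)
              rw [this, norm_smul, Real.norm_eq_abs, abs_of_pos hδpos]
        obtain ⟨w, hw, hwn⟩ := htarget
        rw [hφval, hw, ← smul_sub, norm_smul, Real.norm_eq_abs, abs_of_pos hαk0]
        have hd : ‖φ (ts r) (ys r) (us r) - w‖ < ε := by
          calc ‖φ (ts r) (ys r) (us r) - w‖
              ≤ ‖φ (ts r) (ys r) (us r) - ys (r + 1)‖ + ‖ys (r + 1) - w‖ := by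
                rw [← sub_add_sub_cancel (φ (ts r) (ys r) (us r)) (ys (r + 1)) w]
                exact norm_add_le _ _
            _ < ε / 2 + ε / 2 := by
                have := hδy
                apply add_lt_add_of_lt_of_le hnr
                linarith
            _ = ε := by ring
        calc α ^ k * ‖φ (ts r) (ys r) (us r) - w‖
            ≤ 1 * ‖φ (ts r) (ys r) (us r) - w‖ :=
              mul_le_mul_of_nonneg_right hαk1 (norm_nonneg _)
          _ = ‖φ (ts r) (ys r) (us r) - w‖ := one_mul _
          _ < ε := hd
end

section
/- Consider the affine control system with solutions φ satisfying the scaling identity α φ(t,y,u) = φ(t, αy, αu) for α ∈ (0,1] and φ(t,0,0)=0 for all t. If y belongs to a chain controllable set, then for all ε, τ > 0 there exists a controlled ((1+2‖y‖)ε, τ)-chain from 0 to y. -/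
section helpers
variable {Y C : Type*} [NormedAddCommGroup Y] {φ : ℝ → Y → C → Y} {𝒰 : Set C}

lemma chain_mono {ε ε' τ a b} (hεε' : ε ≤ ε') (h : ControlledChain φ 𝒰 ε τ a b) :
    ControlledChain φ 𝒰 ε' τ a b := by
  obtain ⟨q, ys, us, ts, hq, h0, hq', hstep⟩ := h
  exact ⟨q, ys, us, ts, hq, h0, hq', fun j hj =>
    ⟨(hstep j hj).1, (hstep j hj).2.1, lt_of_lt_of_le (hstep j hj).2.2 hεε'⟩⟩

lemma chain_trans {ε τ a b c} (h1 : ControlledChain φ 𝒰 ε τ a b)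
    (h2 : ControlledChain φ 𝒰 ε τ b c) : ControlledChain φ 𝒰 ε τ a c := by
  obtain ⟨q, ys, us, ts, hq, h0, hq', hstep⟩ := h1
  obtain ⟨q', ys', us', ts', hq2, h02, hq2', hstep2⟩ := h2
  refine ⟨q + q', fun j => if j < q then ys j else ys' (j - q),
    fun j => if j < q then us j else us' (j - q),
    fun j => if j < q then ts j else ts' (j - q), by omega, ?_, ?_, ?_⟩
  · have : (0:ℕ) < q := hq
    simp [this, h0]
  · have : ¬ (q + q' < q) := by omega
    simp [this, hq2']
  · intro j hj
    by_cases hjq : j < q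
    · obtain ⟨hu, ht, he⟩ := hstep j hjq
      refine ⟨by simp [hjq, hu], by simp [hjq, ht], ?_⟩
      by_cases hj1 : j + 1 < q
      · simpa [hjq, hj1] using he
      · have hje : j + 1 = q := by omega
        have : ¬ (j + 1 < q) := by omega
        simp only [if_pos hjq, if_neg this, hje]
        simpa [hje, Nat.sub_self, h02, hq'] using he
    · have hj2 : j - q < q' := by omega
      obtain ⟨hu, ht, he⟩ := hstep2 (j - q) hj2
      have h1 : ¬ (j + 1 < q) := by omega
      have : j + 1 - q = (j - q) + 1 := by omega
      refine ⟨by simp [hjq, hu], by simp [hjq, ht], ?_⟩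
      simp only [if_neg hjq, if_neg h1, this]
      exact he

lemma chain_retarget {ε δ τ a b c} (h : ControlledChain φ 𝒰 ε τ a b)
    (hbc : ‖b - c‖ ≤ δ) : ControlledChain φ 𝒰 (ε + δ) τ a c := by
  obtain ⟨q, ys, us, ts, hq, h0, hq', hstep⟩ := h
  have hδ : 0 ≤ δ := le_trans (norm_nonneg _) hbc
  refine ⟨q, fun j => if j = q then c else ys j, us, ts, hq, ?_, by simp, ?_⟩
  · have : (0 : ℕ) ≠ q := by omega
    simp [this, h0]
  · intro j hj
    obtain ⟨hu, ht, he⟩ := hstep j hj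
    have hjq : j ≠ q := by omega
    refine ⟨hu, ht, ?_⟩
    by_cases hj1 : j + 1 = q
    · simp only [if_neg hjq, if_pos hj1]
      calc ‖φ (ts j) (ys j) (us j) - c‖
          ≤ ‖φ (ts j) (ys j) (us j) - ys (j+1)‖ + ‖ys (j+1) - c‖ := norm_sub_le_norm_sub_add_norm_sub _ _ _
        _ < ε + δ := by
            have : ‖ys (j+1) - c‖ ≤ δ := by rw [hj1, hq']; exact hbc
            linarith
    · simp only [if_neg hjq, if_neg hj1]
      linarith

lemma chain_scale [NormedSpace ℝ Y] [SMul ℝ C]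
    (hUscale : ∀ α : ℝ, 0 < α → α ≤ 1 → ∀ u ∈ 𝒰, α • u ∈ 𝒰)
    (hscale : ∀ α : ℝ, 0 < α → α ≤ 1 → ∀ (t : ℝ) (y : Y) (u : C),
      α • φ t y u = φ t (α • y) (α • u))
    {β : ℝ} (hβ0 : 0 < β) (hβ1 : β ≤ 1) {ε τ a b}
    (h : ControlledChain φ 𝒰 ε τ a b) :
    ControlledChain φ 𝒰 (β * ε) τ (β • a) (β • b) := by
  obtain ⟨q, ys, us, ts, hq, h0, hq', hstep⟩ := h
  refine ⟨q, fun j => β • ys j, fun j => β • us j, ts, hq, by simp [h0], by simp [hq'], ?_⟩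
  intro j hj
  obtain ⟨hu, ht, he⟩ := hstep j hj
  refine ⟨hUscale β hβ0 hβ1 _ hu, ht, ?_⟩
  rw [← hscale β hβ0 hβ1, ← smul_sub, norm_smul, Real.norm_eq_abs, abs_of_pos hβ0]
  exact mul_lt_mul_of_pos_left he hβ0

end helpers

/-- For an affine control system satisfying the scaling identity
`α φ(t,y,u) = φ(t, αy, αu)` for `α ∈ (0,1]` and `φ(t,0,0) = 0`, every point `y` of a
chain controllable set can be reached from `0` by a controlled
`((1+2‖y‖)ε, τ)`-chain, for all `ε, τ > 0`. -/
theorem stmt14 {Y C : Type*} [NormedAddCommGroup Y] [NormedSpace ℝ Y]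
    [SMul ℝ C] [Zero C]
    (φ : ℝ → Y → C → Y) (𝒰 : Set C)
    (h0U : (0 : C) ∈ 𝒰)
    (hUscale : ∀ α : ℝ, 0 < α → α ≤ 1 → ∀ u ∈ 𝒰, α • u ∈ 𝒰)
    (hscale : ∀ α : ℝ, 0 < α → α ≤ 1 → ∀ (t : ℝ) (y : Y) (u : C),
      α • φ t y u = φ t (α • y) (α • u))
    (hzero : ∀ t : ℝ, φ t 0 (0 : C) = 0)
    (E' : Set Y)
    (hcc : ∀ y ∈ E', ∀ z ∈ E', ∀ ε > 0, ∀ τ > 0, ControlledChain φ 𝒰 ε τ y z) :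
    ∀ y ∈ E', ∀ ε > 0, ∀ τ > 0,
      ControlledChain φ 𝒰 ((1 + 2 * ‖y‖) * ε) τ 0 y := by
  intro y hy ε hε τ hτ
  by_cases hbig : (1:ℝ)/2 ≤ ε
  · -- trivial one-step chain
    refine ⟨1, fun j => if j = 0 then 0 else y, fun _ => 0, fun _ => τ, le_refl _,
      by simp, by simp, ?_⟩
    intro j hj
    have hj0 : j = 0 := by omega
    subst hj0
    refine ⟨h0U, le_refl _, ?_⟩
    norm_num [hzero]
    nlinarith [norm_nonneg y]
  · push_neg at hbig
    have hε1 : ε < 1 := by linarith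
    -- chain from y to y with error < ε
    have hC : ControlledChain φ 𝒰 ε τ y y := hcc y hy y hy ε hε τ hτ
    have hbound : ε + ε * ‖y‖ ≤ (1 + 2 * ‖y‖) * ε := by nlinarith [norm_nonneg y]
    have hεb : ε ≤ (1 + 2 * ‖y‖) * ε := by nlinarith [norm_nonneg y]
    -- induction claim
    have claim : ∀ j : ℕ, ((j:ℝ) + 1) * ε < 1 →
        ControlledChain φ 𝒰 ((1 + 2 * ‖y‖) * ε) τ 0 ((((j:ℝ) + 1) * ε) • y) := by
      intro j
      induction j with
      | zero =>
        intro _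
        refine ⟨1, fun i => if i = 0 then 0 else (((0:ℝ) + 1) * ε) • y,
          fun _ => 0, fun _ => τ, le_refl _, by simp, by simp, ?_⟩
        intro i hi
        have hi0 : i = 0 := by omega
        subst hi0
        refine ⟨h0U, le_refl _, ?_⟩
        norm_num [hzero, norm_smul, abs_of_pos hε]
        nlinarith [norm_nonneg y]
      | succ j ih =>
        intro hlt
        have hjε : ((j:ℝ) + 1) * ε < 1 := by
          have : ((j:ℝ) + 1) ≤ ((j:ℝ) + 1 + 1) := by linarith
          push_cast at hlt ⊢
          nlinarith
        have hβ0 : 0 < ((j:ℝ) + 1) * ε := by positivity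
        have hβ1 : ((j:ℝ) + 1) * ε ≤ 1 := le_of_lt hjε
        have hsc := chain_scale hUscale hscale hβ0 hβ1 hC
        have hdist : ‖(((j:ℝ) + 1) * ε) • y - ((((j:ℝ)+1) + 1) * ε) • y‖ ≤ ε * ‖y‖ := by
          rw [← sub_smul, norm_smul]
          have : (((j:ℝ) + 1) * ε - (((j:ℝ)+1) + 1) * ε) = -ε := by ring
          rw [this, norm_neg, Real.norm_eq_abs, abs_of_pos hε]
        have hre := chain_retarget hsc hdist
        have hle : ((j:ℝ) + 1) * ε * ε + ε * ‖y‖ ≤ (1 + 2 * ‖y‖) * ε := by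
          nlinarith [norm_nonneg y]
        have := chain_trans (ih hjε) (chain_mono hle hre)
        convert this using 2
        push_cast
        ring
    -- find minimal n with 1 ≤ n * ε
    have hex : ∃ n : ℕ, 1 ≤ (n:ℝ) * ε := by
      obtain ⟨n, hn⟩ := exists_nat_gt (1/ε)
      exact ⟨n, by rw [div_lt_iff₀ hε] at hn; linarith⟩
    classical
    let n := Nat.find hex
    have hn : 1 ≤ (n:ℝ) * ε := Nat.find_spec hex
    have hn2 : 2 ≤ n := by
      by_contra h
      interval_cases n <;> simp_all <;> nlinarith
    have hnm : ¬ (1 ≤ ((n-1 : ℕ):ℝ) * ε) := Nat.find_min hex (by omega)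
    push_neg at hnm
    have hcast : ((n-1:ℕ):ℝ) = (n:ℝ) - 1 := by
      push_cast [Nat.cast_sub (by omega : 1 ≤ n)]; ring
    rw [hcast] at hnm
    set β : ℝ := ((n:ℝ) - 1) * ε with hβ
    have hβ0 : 0 < β := by
      have : (2:ℝ) ≤ (n:ℝ) := by exact_mod_cast hn2
      have : (1:ℝ) ≤ (n:ℝ) - 1 := by linarith
      positivity
    have hβ1 : β ≤ 1 := le_of_lt hnm
    -- chain from 0 to β • y
    have hchain1 : ControlledChain φ 𝒰 ((1 + 2 * ‖y‖) * ε) τ 0 (β • y) := by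
      have := claim (n - 2) (by
        have : ((n-2:ℕ):ℝ) = (n:ℝ) - 2 := by
          push_cast [Nat.cast_sub (by omega : 2 ≤ n)]; ring
        rw [this]
        have : (n:ℝ) - 2 + 1 = (n:ℝ) - 1 := by ring
        rw [this]
        exact hnm)
      convert this using 2
      have : ((n-2:ℕ):ℝ) = (n:ℝ) - 2 := by
        push_cast [Nat.cast_sub (by omega : 2 ≤ n)]; ring
      rw [this, hβ]; ring
    -- scaled chain from β•y to β•y, retarget to y
    have hsc := chain_scale hUscale hscale hβ0 hβ1 hC
    have hdist : ‖β • y - y‖ ≤ ε * ‖y‖ := by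
      have : β • y - y = (β - 1) • y := by rw [sub_smul, one_smul]
      rw [this, norm_smul, Real.norm_eq_abs, abs_of_nonpos (by linarith)]
      have h1β : 1 - β ≤ ε := by
        rw [hβ]
        have : 1 ≤ (n:ℝ) * ε := hn
        nlinarith
      have := norm_nonneg y
      nlinarith
    have hre := chain_retarget hsc hdist
    have hle : β * ε + ε * ‖y‖ ≤ (1 + 2 * ‖y‖) * ε := by
      have : β * ε ≤ ε := by nlinarith
      nlinarith [norm_nonneg y]
    exact chain_trans hchain1 (chain_mono hle hre)
end
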